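/- arXiv:2404.15550 — 2 statements merged into one kernel-verified Lean document; each statement's English description precedes it below -/
import Mathlib

section
/- Let (X,d,μ) be a space of homogeneous type, let p(·), q(·) ∈ 𝒫(X) ∩ LH satisfy 1/p(x) − 1/q(x) ≡ η for a constant η ∈ [0,1), and let ω be a weight on X. Suppose there is a constant C₀ such that sup_{t>0} t ‖ω χ_{{x∈X : M_η f(x) > t}}‖_{q(·)} ≤ C₀‖ω f‖_{p(·)} for every measurable function f. Then there is a constant K, independent of the ball, such that for every ball B ⊆ X with ‖ω^{−1} χ_B‖_{p′(·)} < ∞ one has μ(B)^{η−1} ‖ω χ_B‖_{q(·)} ‖ω^{−1} χ_B‖_{p′(·)} ≤ K. -/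
open MeasureTheory ENNReal Set Filter Topology

noncomputable section

variable {X : Type*}

/-- `d` is a quasi-metric on `X` with quasi-triangle constant `A0`. -/
def IsQuasiMetric (d : X → X → ℝ) (A0 : ℝ) : Prop :=
  1 ≤ A0 ∧ (∀ x y, 0 ≤ d x y) ∧ (∀ x y, d x y = 0 ↔ x = y) ∧
    (∀ x y, d x y = d y x) ∧ ∀ x y z, d x y ≤ A0 * (d x z + d z y)

/-- The quasi-metric ball `B(c,r)`. -/
def qball (d : X → X → ℝ) (c : X) (r : ℝ) : Set X := {y | d c y < r}

/-- The measure `μ` is doubling (with constant `Cμ`) on quasi-metric balls: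
`0 < μ(B(x,2r)) ≤ Cμ·μ(B(x,r)) < ∞`. -/
def IsDoubling [MeasurableSpace X] (d : X → X → ℝ) (μ : Measure X) (Cμ : ℝ≥0∞) : Prop :=
  1 ≤ Cμ ∧ ∀ (x : X) (r : ℝ), 0 < r →
    0 < μ (qball d x (2 * r)) ∧ μ (qball d x (2 * r)) ≤ Cμ * μ (qball d x r) ∧
      Cμ * μ (qball d x r) < ∞

/-- The Luxemburg norm `‖f‖_{p(·)}` for a variable (possibly infinite) exponent `p`. -/
def luxNorm [MeasurableSpace X] (μ : Measure X) (p : X → ℝ≥0∞) (f : X → ℝ≥0∞) : ℝ≥0∞ :=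
  sInf {lam : ℝ≥0∞ | 0 < lam ∧
    (∫⁻ x in {x | p x ≠ ∞}, (f x / lam) ^ (p x).toReal ∂μ) +
      essSup (fun x => f x / lam) (μ.restrict {x | p x = ∞}) ≤ 1}

/-- The class `𝒫₁(X)`: exponents with values in `[1,∞)` and `p₊ < ∞`. -/
def MemP1 [MeasurableSpace X] (μ : Measure X) (p : X → ℝ≥0∞) : Prop :=
  Measurable p ∧ (∀ x, 1 ≤ p x) ∧ (∀ x, p x ≠ ∞) ∧ essSup p μ < ∞

/-- The class `𝒫(X)`: additionally `1 < p₋`. -/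
def MemP [MeasurableSpace X] (μ : Measure X) (p : X → ℝ≥0∞) : Prop :=
  MemP1 μ p ∧ 1 < essInf p μ

/-- Local log-Hölder continuity `LH₀`. -/
def MemLH0 (d : X → X → ℝ) (p : X → ℝ≥0∞) : Prop :=
  ∃ C0 : ℝ, 0 ≤ C0 ∧ ∀ x y, d x y < 1 / 2 →
    |(p x).toReal - (p y).toReal| ≤ C0 / Real.log (Real.exp 1 + 1 / d x y)

/-- Log-Hölder decay at infinity `LH_∞` with base point `x0` and limit value `pinf`. -/
def MemLHinf (d : X → X → ℝ) (x0 : X) (pinf : ℝ) (p : X → ℝ≥0∞) : Prop :=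
  ∃ Cinf : ℝ, 0 ≤ Cinf ∧ ∀ x, |(p x).toReal - pinf| ≤ Cinf / Real.log (Real.exp 1 + d x x0)

/-- Global log-Hölder continuity `LH = LH₀ ∩ LH_∞`. -/
def MemLH (d : X → X → ℝ) (p : X → ℝ≥0∞) : Prop :=
  MemLH0 d p ∧ ∃ x0 pinf, MemLHinf d x0 pinf p

/-- `w` is a weight: measurable, positive and finite a.e., and locally integrable. -/
def IsWeight [MeasurableSpace X] (d : X → X → ℝ) (μ : Measure X) (w : X → ℝ≥0∞) : Prop :=
  Measurable w ∧ (∀ᵐ x ∂μ, 0 < w x ∧ w x < ∞) ∧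
    ∀ (c : X) (r : ℝ), 0 < r → ∫⁻ x in qball d c r, w x ∂μ < ∞

/-- The pointwise conjugate exponent `p′(·)`, `1/p(x) + 1/p′(x) = 1`. -/
def conjExp (p : X → ℝ≥0∞) : X → ℝ≥0∞ := fun x => if p x = ∞ then 1 else p x / (p x - 1)

/-- The `A_{p(·),q(·)}` characteristic constant
`sup_B μ(B)^{η−1} ‖w χ_B‖_{q(·)} ‖w⁻¹ χ_B‖_{p′(·)}`. -/
def ApqConst [MeasurableSpace X] (d : X → X → ℝ) (μ : Measure X) (η : ℝ)
    (p q : X → ℝ≥0∞) (w : X → ℝ≥0∞) : ℝ≥0∞ :=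
  ⨆ (c : X) (r : ℝ) (_ : 0 < r),
    μ (qball d c r) ^ (η - 1) * luxNorm μ q ((qball d c r).indicator w) *
      luxNorm μ (conjExp p) ((qball d c r).indicator fun x => (w x)⁻¹)

/-- The fractional maximal operator `M_η`. -/
def fracMax [MeasurableSpace X] (d : X → X → ℝ) (μ : Measure X) (η : ℝ)
    (f : X → ℝ≥0∞) (x : X) : ℝ≥0∞ :=
  ⨆ (c : X) (r : ℝ) (_ : 0 < r) (_ : x ∈ qball d c r),
    μ (qball d c r) ^ (η - 1) * ∫⁻ y in qball d c r, f y ∂μ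

/-- The Muckenhoupt `A₁` condition: `Mw ≤ C w` a.e. -/
def MemA1 [MeasurableSpace X] (d : X → X → ℝ) (μ : Measure X) (w : X → ℝ≥0∞) : Prop :=
  ∃ C : ℝ≥0∞, C ≠ ∞ ∧ ∀ᵐ x ∂μ, fracMax d μ 0 w x ≤ C * w x

/-- The Muckenhoupt `A_p` condition for `1 < p < ∞`. -/
def MemAp [MeasurableSpace X] (d : X → X → ℝ) (μ : Measure X) (p : ℝ)
    (w : X → ℝ≥0∞) : Prop :=
  (⨆ (c : X) (r : ℝ) (_ : 0 < r),
    ((μ (qball d c r))⁻¹ * ∫⁻ x in qball d c r, w x ∂μ) *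
      ((μ (qball d c r))⁻¹ * ∫⁻ x in qball d c r, w x ^ (-(1 / (p - 1))) ∂μ) ^ (p - 1)) ≠ ∞

/-- The class `A_∞ = ⋃_{p ≥ 1} A_p`. -/
def MemAinfty [MeasurableSpace X] (d : X → X → ℝ) (μ : Measure X) (w : X → ℝ≥0∞) : Prop :=
  MemA1 d μ w ∨ ∃ p : ℝ, 1 < p ∧ MemAp d μ p w

/-! The test function `f = ω⁻¹ h` is built from an almost-extremal `h` for the duality
between `L^{p(·)}` and `L^{p′(·)}`: for `0 < l < N = ‖ω⁻¹χ_B‖_{p′(·)}` put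
`h = (ω⁻¹χ_B / l)^{p′-1} / ρ` with `ρ` the `p′`-modular of `ω⁻¹χ_B / l`. Here `1 < ρ < ∞`
(finite because `p₋ > 1` bounds `p′`), so `(p′-1) p = p′` makes the `p`-modular of `ω f = h`
at most `1`, while `∫_B f = l`. Hence `M_η f ≥ μ(B)^{η-1} l` on `B`, and the weak-type bound
at the levels `t < μ(B)^{η-1} l` gives `μ(B)^{η-1} l ‖ωχ_B‖_{q(·)} ≤ C₀`; letting `l → N`
shows that `K = C₀` works. -/

theorem ENNReal.mul_le_of_forall_pos_lt {a b c : ℝ≥0∞}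
    (h : ∀ b', 0 < b' → b' < b → a * b' ≤ c) : a * b ≤ c := by
  refine ENNReal.mul_le_of_forall_lt fun a' ha b' hb => ?_
  rcases eq_zero_or_pos b' with rfl | hb₀
  · simp
  exact (mul_le_mul_of_nonneg_right ha.le zero_le).trans (h b' hb₀ hb)

theorem ENNReal.mul_rpow_sub_one_div_eq {b l ρ : ℝ≥0∞} {s : ℝ} (hs : 1 ≤ s) (hl₀ : l ≠ 0)
    (hl : l ≠ ∞) : b * ((b / l) ^ (s - 1) / ρ) = l * ρ⁻¹ * (b / l) ^ s := by
  calc b * ((b / l) ^ (s - 1) / ρ) = l * ρ⁻¹ * ((b / l) ^ (s - 1) * (b / l) ^ (1 : ℝ)) := by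
        rw [ENNReal.rpow_one, div_eq_mul_inv]
        nth_rw 1 [← ENNReal.mul_div_cancel hl₀ hl (b := b)]
        ring
    _ = l * ρ⁻¹ * (b / l) ^ s := by
        rw [← ENNReal.rpow_add_of_nonneg _ _ (sub_nonneg.mpr hs) zero_le_one, sub_add_cancel]

theorem ENNReal.mul_inv_mul_le (a b : ℝ≥0∞) : a * (a⁻¹ * b) ≤ b :=
  calc a * (a⁻¹ * b) = a * a⁻¹ * b := (mul_assoc _ _ _).symm
    _ ≤ 1 * b := by gcongr; exact ENNReal.mul_inv_le_one a
    _ = b := one_mul b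

theorem ENNReal.rpow_le_max_one_rpow {a : ℝ≥0∞} {s t : ℝ} (hs : 0 ≤ s) (hst : s ≤ t) :
    a ^ s ≤ max 1 (a ^ t) := by
  rcases le_total a 1 with h | h
  · exact le_max_of_le_left (ENNReal.rpow_le_one h hs)
  · exact le_max_of_le_right (ENNReal.rpow_le_rpow_of_exponent_le h hst)

/-- The modular of `luxNorm`: `luxNorm μ p f = sInf {l | 0 < l ∧ luxModular μ p (f / l) ≤ 1}`
holds by definition. -/
def luxModular [MeasurableSpace X] (μ : Measure X) (p f : X → ℝ≥0∞) : ℝ≥0∞ :=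
  (∫⁻ x in {x | p x ≠ ∞}, f x ^ (p x).toReal ∂μ) + essSup f (μ.restrict {x | p x = ∞})

section Luxemburg

variable [MeasurableSpace X] {μ : Measure X} {p f g : X → ℝ≥0∞} {l : ℝ≥0∞}

theorem luxModular_eq_lintegral (hp : ∀ᵐ x ∂μ, p x ≠ ∞) (f : X → ℝ≥0∞) :
    luxModular μ p f = ∫⁻ x, f x ^ (p x).toReal ∂μ := by
  have hnull : μ {x | p x = ∞} = 0 := by simpa [ae_iff] using hp
  rw [luxModular, Measure.restrict_eq_self_of_ae_mem (s := {x | p x ≠ ∞}) hp,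
    Measure.restrict_eq_zero.mpr hnull, essSup_measure_zero, bot_eq_zero', add_zero]

theorem luxModular_mono_ae (h : f ≤ᵐ[μ] g) : luxModular μ p f ≤ luxModular μ p g :=
  add_le_add
    (lintegral_mono_ae <| ae_restrict_of_ae <|
      h.mono fun _ hx => ENNReal.rpow_le_rpow hx ENNReal.toReal_nonneg)
    (essSup_mono_ae (ae_restrict_of_ae h))

theorem luxNorm_mono_ae (h : f ≤ᵐ[μ] g) : luxNorm μ p f ≤ luxNorm μ p g :=
  sInf_le_sInf fun l ⟨hl, hmod⟩ =>
    ⟨hl, (luxModular_mono_ae (h.mono fun _ hx => ENNReal.div_le_div_right hx l)).trans hmod⟩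

theorem luxNorm_le_of_luxModular_le_one (hl : 0 < l)
    (h : luxModular μ p (fun x => f x / l) ≤ 1) : luxNorm μ p f ≤ l :=
  sInf_le ⟨hl, h⟩

theorem one_lt_luxModular_of_lt_luxNorm (hl : 0 < l) (h : l < luxNorm μ p f) :
    1 < luxModular μ p (fun x => f x / l) :=
  lt_of_not_ge fun hmod => h.not_ge (luxNorm_le_of_luxModular_le_one hl hmod)

theorem luxModular_div_ne_top (hp : essSup p μ ≠ ∞) (hf : luxNorm μ p f ≠ ∞) (hl : l ≠ 0) :
    luxModular μ p (fun x => f x / l) ≠ ∞ := by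
  have hp_top : ∀ᵐ x ∂μ, p x ≠ ∞ :=
    (ENNReal.ae_le_essSup p).mono fun _ hx => ne_top_of_le_ne_top hp hx
  obtain ⟨l₀, ⟨hl₀, hmod₀⟩, hl₀_top⟩ := sInf_lt_iff.mp (lt_top_iff_ne_top.mpr hf)
  change luxModular μ p _ ≤ 1 at hmod₀
  set M := max 1 ((l₀ / l) ^ (essSup p μ).toReal)
  have hM : M ≠ ∞ := max_ne_top one_ne_top
    (ENNReal.rpow_ne_top_of_nonneg ENNReal.toReal_nonneg (ENNReal.div_ne_top hl₀_top.ne hl))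
  have hpt : ∀ᵐ x ∂μ, (f x / l) ^ (p x).toReal ≤ M * (f x / l₀) ^ (p x).toReal := by
    filter_upwards [ENNReal.ae_le_essSup p] with x hx
    have hsplit : f x / l = l₀ / l * (f x / l₀) := by
      rw [div_eq_mul_inv, div_eq_mul_inv, div_eq_mul_inv,
        show l₀ * l⁻¹ * (f x * l₀⁻¹) = l₀ * l₀⁻¹ * (f x * l⁻¹) by ring,
        ENNReal.mul_inv_cancel hl₀.ne' hl₀_top.ne, one_mul]
    rw [hsplit, ENNReal.mul_rpow_of_nonneg _ _ ENNReal.toReal_nonneg]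
    gcongr
    exact ENNReal.rpow_le_max_one_rpow ENNReal.toReal_nonneg (ENNReal.toReal_mono hp hx)
  rw [luxModular_eq_lintegral hp_top] at hmod₀ ⊢
  refine ne_top_of_le_ne_top (ENNReal.mul_ne_top hM one_ne_top) ?_
  calc ∫⁻ x, (f x / l) ^ (p x).toReal ∂μ ≤ ∫⁻ x, M * (f x / l₀) ^ (p x).toReal ∂μ :=
        lintegral_mono_ae hpt
    _ = M * ∫⁻ x, (f x / l₀) ^ (p x).toReal ∂μ := lintegral_const_mul' _ _ hM
    _ ≤ M * 1 := by gcongr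

end Luxemburg

section ConjugateExponent

variable {p : X → ℝ≥0∞}

theorem conjExp_apply_of_one_le {x : X} (hx : 1 ≤ p x) : conjExp p x = 1 + (p x - 1)⁻¹ := by
  unfold conjExp
  split_ifs with htop
  · simp [htop]
  rcases hx.eq_or_lt with h1 | h1
  · simp [← h1]
  · calc p x / (p x - 1) = (p x - 1 + 1) / (p x - 1) := by rw [tsub_add_cancel_of_le hx]
      _ = 1 + (p x - 1)⁻¹ := by
        rw [ENNReal.add_div, ENNReal.div_self (tsub_pos_of_lt h1).ne' (ENNReal.sub_ne_top htop),
          one_div]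

theorem one_le_conjExp {x : X} (hx : 1 ≤ p x) : 1 ≤ conjExp p x := by
  rw [conjExp_apply_of_one_le hx]
  exact le_self_add

theorem toReal_conjExp_sub_one_mul {x : X} (h1 : 1 < p x) (htop : p x ≠ ∞) :
    ((conjExp p x).toReal - 1) * (p x).toReal = (conjExp p x).toReal := by
  have hP : 1 < (p x).toReal := by
    simpa using (ENNReal.toReal_lt_toReal ENNReal.one_ne_top htop).mpr h1
  rw [conjExp_apply_of_one_le h1.le,
    ENNReal.toReal_add ENNReal.one_ne_top (ENNReal.inv_ne_top.mpr (tsub_pos_of_lt h1).ne'),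
    ENNReal.toReal_inv, ENNReal.toReal_sub_of_le h1.le htop, ENNReal.toReal_one]
  have : (p x).toReal - 1 ≠ 0 := by linarith
  field_simp
  ring

theorem rpow_toReal_conjExp_sub_one_div_rpow_le {x : X} {a ρ : ℝ≥0∞} (h1 : 1 < p x)
    (htop : p x ≠ ∞) (hρ : 1 ≤ ρ) :
    (a ^ ((conjExp p x).toReal - 1) / ρ) ^ (p x).toReal ≤ ρ⁻¹ * a ^ (conjExp p x).toReal := by
  have hP : 1 ≤ (p x).toReal := by
    simpa using (ENNReal.toReal_le_toReal ENNReal.one_ne_top htop).mpr h1.le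
  calc (a ^ ((conjExp p x).toReal - 1) / ρ) ^ (p x).toReal
      = a ^ (conjExp p x).toReal / ρ ^ (p x).toReal := by
        rw [ENNReal.div_rpow_of_nonneg _ _ ENNReal.toReal_nonneg, ← ENNReal.rpow_mul,
          toReal_conjExp_sub_one_mul h1 htop]
    _ ≤ a ^ (conjExp p x).toReal / ρ ^ (1 : ℝ) :=
        ENNReal.div_le_div_left (ENNReal.rpow_le_rpow_of_exponent_le hρ hP) _
    _ = ρ⁻¹ * a ^ (conjExp p x).toReal := by rw [ENNReal.rpow_one, div_eq_mul_inv, mul_comm]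

theorem measurable_conjExp [MeasurableSpace X] (hp : Measurable p) : Measurable (conjExp p) :=
  Measurable.ite (hp (measurableSet_singleton ∞)) measurable_const
    (hp.div (hp.sub measurable_const))

theorem essSup_conjExp_ne_top [MeasurableSpace X] {μ : Measure X} (hp : 1 < essInf p μ) :
    essSup (conjExp p) μ ≠ ∞ := by
  have hle : ∀ᵐ x ∂μ, conjExp p x ≤ 1 + (essInf p μ - 1)⁻¹ := by
    filter_upwards [ae_essInf_le (f := p) (by isBoundedDefault)] with x hx
    rw [conjExp_apply_of_one_le (hp.le.trans hx)]
    gcongr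
  refine ne_top_of_le_ne_top ?_ (essSup_le_of_ae_le _ hle)
  exact ENNReal.add_ne_top.mpr ⟨ENNReal.one_ne_top, ENNReal.inv_ne_top.mpr (tsub_pos_of_lt hp).ne'⟩

end ConjugateExponent

section Duality

variable [MeasurableSpace X] {μ : Measure X} {p g : X → ℝ≥0∞} {l : ℝ≥0∞}

theorem exists_luxNorm_le_one_lintegral_mul_eq (hpm : Measurable p)
    (hp_top : ∀ᵐ x ∂μ, p x ≠ ∞) (hp_inf : 1 < essInf p μ) (hg : Measurable g)
    (hN : luxNorm μ (conjExp p) g ≠ ∞) (hl₀ : 0 < l) (hl : l < luxNorm μ (conjExp p) g) :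
    ∃ h : X → ℝ≥0∞, Measurable h ∧ luxNorm μ p h ≤ 1 ∧ ∫⁻ x, g x * h x ∂μ = l := by
  set s : X → ℝ := fun x => (conjExp p x).toReal
  have hp_one : ∀ᵐ x ∂μ, 1 < p x :=
    (ae_essInf_le (f := p) (by isBoundedDefault)).mono fun _ hx => hp_inf.trans_le hx
  have hconj_top : ∀ᵐ x ∂μ, conjExp p x ≠ ∞ := (ENNReal.ae_le_essSup _).mono fun _ hx =>
    ne_top_of_le_ne_top (essSup_conjExp_ne_top hp_inf) hx
  set ρ := ∫⁻ x, (g x / l) ^ s x ∂μ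
  have hρ_one : 1 < ρ := by
    simpa only [luxModular_eq_lintegral hconj_top] using one_lt_luxModular_of_lt_luxNorm hl₀ hl
  have hρ_top : ρ ≠ ∞ := by
    simpa only [luxModular_eq_lintegral hconj_top] using
      luxModular_div_ne_top (essSup_conjExp_ne_top hp_inf) hN hl₀.ne'
  have hρ₀ : ρ ≠ 0 := (zero_lt_one.trans hρ_one).ne'
  have hl_top : l ≠ ∞ := (hl.trans (lt_top_iff_ne_top.mpr hN)).ne
  refine ⟨fun x => (g x / l) ^ (s x - 1) / ρ, ?_, ?_, ?_⟩
  · exact ((hg.div_const l).pow ((measurable_conjExp hpm).ennreal_toReal.sub_const 1)).div_const ρ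
  · refine luxNorm_le_of_luxModular_le_one zero_lt_one ?_
    rw [luxModular_eq_lintegral hp_top]
    have hpt : ∀ᵐ x ∂μ,
        ((g x / l) ^ (s x - 1) / ρ / 1) ^ (p x).toReal ≤ ρ⁻¹ * (g x / l) ^ s x := by
      filter_upwards [hp_top, hp_one] with x htop h1
      rw [div_one]
      exact rpow_toReal_conjExp_sub_one_div_rpow_le h1 htop hρ_one.le
    calc ∫⁻ x, ((g x / l) ^ (s x - 1) / ρ / 1) ^ (p x).toReal ∂μ
        ≤ ∫⁻ x, ρ⁻¹ * (g x / l) ^ s x ∂μ := lintegral_mono_ae hpt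
      _ = ρ⁻¹ * ρ := lintegral_const_mul' _ _ (ENNReal.inv_ne_top.mpr hρ₀)
      _ = 1 := ENNReal.inv_mul_cancel hρ₀ hρ_top
  · have hpt : ∀ᵐ x ∂μ, g x * ((g x / l) ^ (s x - 1) / ρ) = l * ρ⁻¹ * (g x / l) ^ s x := by
      filter_upwards [hconj_top, hp_one] with x htop h1
      refine ENNReal.mul_rpow_sub_one_div_eq ?_ hl₀.ne' hl_top
      simpa using ENNReal.toReal_mono htop (one_le_conjExp h1.le)
    calc ∫⁻ x, g x * ((g x / l) ^ (s x - 1) / ρ) ∂μ = ∫⁻ x, l * ρ⁻¹ * (g x / l) ^ s x ∂μ :=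
          lintegral_congr_ae hpt
      _ = l * ρ⁻¹ * ρ :=
          lintegral_const_mul' _ _ (ENNReal.mul_ne_top hl_top (ENNReal.inv_ne_top.mpr hρ₀))
      _ = l := by rw [mul_assoc, ENNReal.inv_mul_cancel hρ₀ hρ_top, mul_one]

end Duality

theorem le_fracMax_of_mem_qball [MeasurableSpace X] {d : X → X → ℝ} {μ : Measure X} {η : ℝ}
    {f : X → ℝ≥0∞} {c x : X} {r : ℝ} (hr : 0 < r) (hx : x ∈ qball d c r) :
    μ (qball d c r) ^ (η - 1) * ∫⁻ y in qball d c r, f y ∂μ ≤ fracMax d μ η f x :=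
  le_iSup_of_le c <| le_iSup_of_le r <| le_iSup_of_le hr <| le_iSup_of_le hx le_rfl

theorem mul_luxNorm_indicator_le_of_forall_le [MeasurableSpace X] {μ : Measure X}
    {q ω F : X → ℝ≥0∞} {B : Set X} {a C : ℝ≥0∞}
    (hweak : ∀ t, 0 < t → t * luxNorm μ q ({x | t < F x}.indicator ω) ≤ C)
    (hB : ∀ x ∈ B, a ≤ F x) :
    a * luxNorm μ q (B.indicator ω) ≤ C := by
  refine ENNReal.mul_le_of_forall_lt fun t ht b hb => ?_
  rcases eq_zero_or_pos t with rfl | ht₀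
  · simp
  have hsub : B ⊆ {x | t < F x} := fun x hx => ht.trans_le (hB x hx)
  calc t * b ≤ t * luxNorm μ q ({x | t < F x}.indicator ω) := by
        gcongr
        exact hb.le.trans <| luxNorm_mono_ae <| ae_of_all _ <|
          indicator_le_indicator_of_subset hsub fun _ => zero_le
    _ ≤ C := hweak t ht₀

theorem statement15_general {X : Type*} [MeasurableSpace X]
    (d : X → X → ℝ) (μ : Measure X)
    (hball : ∀ (c : X) (r : ℝ), MeasurableSet (qball d c r))
    (η : ℝ)
    (p q : X → ℝ≥0∞) (hp : MemP μ p)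
    (ω : X → ℝ≥0∞) (hω : IsWeight d μ ω)
    (C0 : ℝ≥0∞) (hC0 : C0 ≠ ∞)
    (hbound : ∀ f : X → ℝ≥0∞, Measurable f → ∀ t : ℝ≥0∞, 0 < t →
      t * luxNorm μ q ({x | t < fracMax d μ η f x}.indicator ω) ≤
        C0 * luxNorm μ p (fun x => ω x * f x)) :
    ∃ K : ℝ≥0∞, K ≠ ∞ ∧ ∀ (c : X) (r : ℝ), 0 < r →
      luxNorm μ (conjExp p) ((qball d c r).indicator fun x => (ω x)⁻¹) ≠ ∞ →
        μ (qball d c r) ^ (η - 1) * luxNorm μ q ((qball d c r).indicator ω) *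
            luxNorm μ (conjExp p) ((qball d c r).indicator fun x => (ω x)⁻¹) ≤ K := by
  refine ⟨C0, hC0, fun c r hr hN => ?_⟩
  set B := qball d c r
  set g := B.indicator fun x => (ω x)⁻¹
  have hlevel : ∀ l, 0 < l → l < luxNorm μ (conjExp p) g →
      μ B ^ (η - 1) * l * luxNorm μ q (B.indicator ω) ≤ C0 := by
    intro l hl₀ hl
    obtain ⟨h, hh, hh_norm, hgh⟩ := exists_luxNorm_le_one_lintegral_mul_eq hp.1.1
      (ae_of_all _ hp.1.2.2.1) hp.2 (hω.1.inv.indicator (hball c r)) hN hl₀ hl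
    set f := fun x => (ω x)⁻¹ * h x
    have hωf : luxNorm μ p (fun x => ω x * f x) ≤ 1 :=
      (luxNorm_mono_ae (ae_of_all _ fun x => ENNReal.mul_inv_mul_le (ω x) (h x))).trans hh_norm
    have hfB : l ≤ ∫⁻ y in B, f y ∂μ :=
      calc l = ∫⁻ x, B.indicator f x ∂μ := hgh.symm.trans <| lintegral_congr fun x =>
            (indicator_mul_left B (fun x => (ω x)⁻¹) h).symm
        _ ≤ ∫⁻ y in B, f y ∂μ := lintegral_indicator_le f B
    refine mul_luxNorm_indicator_le_of_forall_le (fun t ht => ?_) fun x hx =>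
      (by gcongr : μ B ^ (η - 1) * l ≤ _).trans (le_fracMax_of_mem_qball hr hx)
    calc t * luxNorm μ q ({x | t < fracMax d μ η f x}.indicator ω)
        ≤ C0 * luxNorm μ p (fun x => ω x * f x) := hbound f (hω.1.inv.mul hh) t ht
      _ ≤ C0 := mul_le_of_le_one_right' hωf
  exact ENNReal.mul_le_of_forall_pos_lt fun l hl₀ hl =>
    (mul_right_comm _ _ _).trans_le (hlevel l hl₀ hl)

/-- Under the weak-type bound, the `A_{p(·),q(·)}` quantity is
uniformly bounded over the balls with `‖ω⁻¹χ_B‖_{p′(·)} < ∞`. -/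
theorem statement15 {X : Type*} [MeasurableSpace X]
    (d : X → X → ℝ) (A0 : ℝ) (μ : Measure X) (Cμ : ℝ≥0∞)
    (hd : IsQuasiMetric d A0)
    (hball : ∀ (c : X) (r : ℝ), MeasurableSet (qball d c r))
    (hdbl : IsDoubling d μ Cμ)
    (η : ℝ) (hη0 : 0 ≤ η) (hη1 : η < 1)
    (p q : X → ℝ≥0∞) (hp : MemP μ p) (hq : MemP μ q)
    (hpLH : MemLH d p) (hqLH : MemLH d q)
    (hpq : ∀ x, (p x)⁻¹ = (q x)⁻¹ + ENNReal.ofReal η)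
    (ω : X → ℝ≥0∞) (hω : IsWeight d μ ω)
    (C0 : ℝ≥0∞) (hC0 : C0 ≠ ∞)
    (hbound : ∀ f : X → ℝ≥0∞, Measurable f → ∀ t : ℝ≥0∞, 0 < t →
      t * luxNorm μ q ({x | t < fracMax d μ η f x}.indicator ω) ≤
        C0 * luxNorm μ p (fun x => ω x * f x)) :
    ∃ K : ℝ≥0∞, K ≠ ∞ ∧ ∀ (c : X) (r : ℝ), 0 < r →
      luxNorm μ (conjExp p) ((qball d c r).indicator fun x => (ω x)⁻¹) ≠ ∞ →
        μ (qball d c r) ^ (η - 1) * luxNorm μ q ((qball d c r).indicator ω) *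
            luxNorm μ (conjExp p) ((qball d c r).indicator fun x => (ω x)⁻¹) ≤ K :=
  statement15_general d μ hball η p q hp ω hω C0 hC0 hbound

end
end

section
/- Let (X,d,μ) be a space of homogeneous type, let p(·), q(·) ∈ 𝒫₁(X) satisfy 1/p(x) − 1/q(x) ≡ η for a constant η ∈ [0,1), and let ω ∈ A_{p(·),q(·)}(X). Then there is a constant C, depending only on [ω]_{A_{p(·),q(·)}}, q₋ and q₊, such that for every ball B ⊆ X, ∫_B ‖ω^{−1} χ_B‖_{p′(·)}^{q(x)} · μ(B)^{(η−1)q(x)} · ω(x)^{q(x)} dμ(x) ≤ C. -/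
open MeasureTheory ENNReal Set Filter Topology

noncomputable section

variable {X : Type*}

/-! With `a = ‖ω⁻¹χ_B‖_{p′(·)} μ(B)^{η-1}` the integrand is `(a ω)^{q(x)}`, and the
`A_{p(·),q(·)}` condition says `a ‖ωχ_B‖_{q(·)} ≤ [ω]`. Hence `λ = 2 max([ω],1) / a` exceeds the
Luxemburg norm of `ωχ_B`, so the modular of `ωχ_B / λ` is at most `1`; writing
`a ω = 2 max([ω],1) · ω / λ` bounds the integral by `(2 max([ω],1))^{q₊}`. When `a = ∞` the norm
`‖ωχ_B‖_{q(·)}` vanishes, which by Chebyshev's inequality forces `ω = 0` a.e. on `B`. -/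

section Luxemburg

theorem ENNReal.one_le_toReal {x : ℝ≥0∞} (h1 : 1 ≤ x) (h : x ≠ ∞) : 1 ≤ x.toReal := by
  simpa using ENNReal.toReal_mono h h1

variable [MeasurableSpace X] {μ : Measure X} {q : X → ℝ≥0∞} {f : X → ℝ≥0∞}

theorem lintegral_div_rpow_le_one_of_luxNorm_lt (hq : ∀ x, q x ≠ ∞) {lam : ℝ≥0∞}
    (h : luxNorm μ q f < lam) : ∫⁻ x, (f x / lam) ^ (q x).toReal ∂μ ≤ 1 := by
  obtain ⟨lam', ⟨-, hlam'⟩, hlt⟩ := sInf_lt_iff.mp h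
  have hfin : {x | q x ≠ ∞} = univ := eq_univ_of_forall hq
  rw [hfin, Measure.restrict_univ] at hlam'
  calc ∫⁻ x, (f x / lam) ^ (q x).toReal ∂μ ≤ ∫⁻ x, (f x / lam') ^ (q x).toReal ∂μ :=
        lintegral_mono fun x =>
          ENNReal.rpow_le_rpow (ENNReal.div_le_div_left hlt.le _) ENNReal.toReal_nonneg
    _ ≤ 1 := le_self_add.trans hlam'

theorem measure_le_of_luxNorm_eq_zero (hq1 : ∀ x, 1 ≤ q x) (hq : ∀ x, q x ≠ ∞)
    (hf : Measurable f) (h : luxNorm μ q f = 0) {ε t : ℝ≥0∞} (hε0 : ε ≠ 0) (hε : ε ≠ ∞)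
    (ht0 : t ≠ 0) (ht1 : t ≤ 1) : μ {x | ε ≤ f x} ≤ t := by
  have htop : t ≠ ∞ := ne_top_of_le_ne_top one_ne_top ht1
  set lam := t * ε
  have hlam : luxNorm μ q f < lam := h ▸ pos_iff_ne_zero.mpr (mul_ne_zero ht0 hε0)
  have hpt : ∀ x, {x | ε ≤ f x}.indicator (fun _ => t⁻¹) x ≤ (f x / lam) ^ (q x).toReal := by
    intro x
    by_cases hx : ε ≤ f x
    · have h1 : t⁻¹ ≤ f x / lam := by
        rw [ENNReal.le_div_iff_mul_le (Or.inl (mul_ne_zero ht0 hε0))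
          (Or.inl (ENNReal.mul_ne_top htop hε)), ENNReal.inv_mul_cancel_left ht0 htop]
        exact hx
      rw [indicator_of_mem (show x ∈ {x | ε ≤ f x} from hx)]
      calc t⁻¹ ≤ (f x / lam) ^ (1 : ℝ) := (ENNReal.rpow_one _).symm ▸ h1
        _ ≤ (f x / lam) ^ (q x).toReal :=
          ENNReal.rpow_le_rpow_of_exponent_le ((ENNReal.one_le_inv.mpr ht1).trans h1)
            (ENNReal.one_le_toReal (hq1 x) (hq x))
    · rw [indicator_of_notMem (show x ∉ {x | ε ≤ f x} from hx)]
      exact zero_le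
  have hmarkov : t⁻¹ * μ {x | ε ≤ f x} ≤ 1 :=
    calc t⁻¹ * μ {x | ε ≤ f x} = ∫⁻ x, {x | ε ≤ f x}.indicator (fun _ => t⁻¹) x ∂μ :=
          (lintegral_indicator_const (measurableSet_le measurable_const hf) _).symm
      _ ≤ ∫⁻ x, (f x / lam) ^ (q x).toReal ∂μ := lintegral_mono hpt
      _ ≤ 1 := lintegral_div_rpow_le_one_of_luxNorm_lt hq hlam
  simpa using (ENNReal.inv_mul_le_iff ht0 htop).mp hmarkov

theorem ae_eq_zero_of_luxNorm_eq_zero (hq1 : ∀ x, 1 ≤ q x) (hq : ∀ x, q x ≠ ∞)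
    (hf : Measurable f) (h : luxNorm μ q f = 0) : f =ᵐ[μ] 0 := by
  have hlevel : ∀ n : ℕ, μ {x | ((n : ℝ≥0∞) + 1)⁻¹ ≤ f x} = 0 := fun n =>
    le_antisymm (ENNReal.le_of_forall_pos_le_add fun δ hδ _ => by
      rw [zero_add]
      refine (measure_le_of_luxNorm_eq_zero hq1 hq hf h (by simp) (by simp) ?_
        (min_le_right _ _)).trans (min_le_left _ _)
      simpa using hδ.ne') bot_le
  refine ae_iff.mpr (measure_mono_null (fun x hx => ?_) (measure_iUnion_null hlevel))
  obtain ⟨n, hn⟩ := ENNReal.exists_inv_nat_lt hx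
  exact mem_iUnion.mpr ⟨n, (ENNReal.inv_le_inv.mpr le_self_add).trans hn.le⟩


theorem lintegral_mul_rpow_le_of_mul_luxNorm_le (hq1 : ∀ x, 1 ≤ q x) (hq : ∀ x, q x ≠ ∞)
    (hf : Measurable f) {Q : ℝ} (hQ : ∀ᵐ x ∂μ, (q x).toReal ≤ Q) {a K : ℝ≥0∞} (hK : K ≠ ∞)
    (haK : a * luxNorm μ q f ≤ K) :
    ∫⁻ x, (a * f x) ^ (q x).toReal ∂μ ≤ (2 * max K 1) ^ Q := by
  set K' := 2 * max K 1 with hK'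
  have hK'1 : 1 ≤ K' := (le_max_right K 1).trans (le_mul_of_one_le_left' one_le_two)
  have hK'top : K' ≠ ∞ := ENNReal.mul_ne_top ofNat_ne_top (max_ne_top hK one_ne_top)
  have hK'0 : K' ≠ 0 := (zero_lt_one.trans_le hK'1).ne'
  have hqpos : ∀ x, 0 < (q x).toReal := fun x =>
    zero_lt_one.trans_le (ENNReal.one_le_toReal (hq1 x) (hq x))
  by_cases hdeg : a = 0 ∨ f =ᵐ[μ] 0
  · have hzero : ∀ᵐ x ∂μ, (a * f x) ^ (q x).toReal = 0 := by
      rcases hdeg with ha | hf0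
      · exact Eventually.of_forall fun x => by simp [ha, ENNReal.zero_rpow_of_pos (hqpos x)]
      · exact hf0.mono fun x hx => by simp [hx, ENNReal.zero_rpow_of_pos (hqpos x)]
    rw [lintegral_congr_ae hzero, lintegral_zero]
    exact zero_le
  obtain ⟨ha0, hf0⟩ := not_or.mp hdeg
  have hatop : a ≠ ∞ := by
    rintro rfl
    have hN : luxNorm μ q f = 0 := by
      by_contra hN
      exact hK (top_le_iff.mp (ENNReal.top_mul hN ▸ haK))
    exact hf0 (ae_eq_zero_of_luxNorm_eq_zero hq1 hq hf hN)
  set lam := K' / a with hlam_def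
  have hlam : luxNorm μ q f < lam := by
    rw [ENNReal.lt_div_iff_mul_lt (Or.inl ha0) (Or.inl hatop), mul_comm]
    refine haK.trans_lt ((le_max_left K 1).trans_lt ?_)
    rw [hK', two_mul]
    exact ENNReal.lt_add_right (max_ne_top hK one_ne_top)
      (zero_lt_one.trans_le (le_max_right K 1)).ne'
  have hscale : ∀ x, a * f x = K' * (f x / lam) := fun x => by
    rw [hlam_def, div_eq_mul_inv, ENNReal.inv_div (Or.inr hK'top) (Or.inr hK'0), mul_left_comm,
      ENNReal.mul_div_cancel hK'0 hK'top, mul_comm]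
  calc ∫⁻ x, (a * f x) ^ (q x).toReal ∂μ = ∫⁻ x, (K' * (f x / lam)) ^ (q x).toReal ∂μ := by
        simp_rw [hscale]
    _ ≤ ∫⁻ x, K' ^ Q * (f x / lam) ^ (q x).toReal ∂μ := lintegral_mono_ae <| hQ.mono fun x hx => by
        rw [ENNReal.mul_rpow_of_nonneg _ _ ENNReal.toReal_nonneg]
        gcongr
    _ = K' ^ Q * ∫⁻ x, (f x / lam) ^ (q x).toReal ∂μ :=
        lintegral_const_mul' _ _ (ENNReal.rpow_ne_top_of_ne_zero hK'0 hK'top)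
    _ ≤ K' ^ Q := mul_le_of_le_one_right' (lintegral_div_rpow_le_one_of_luxNorm_lt hq hlam)

theorem mul_luxNorm_le_ApqConst (d : X → X → ℝ) (η : ℝ) (p w : X → ℝ≥0∞) (c : X) {r : ℝ}
    (hr : 0 < r) :
    μ (qball d c r) ^ (η - 1) * luxNorm μ q ((qball d c r).indicator w) *
      luxNorm μ (conjExp p) ((qball d c r).indicator fun x => (w x)⁻¹) ≤
        ApqConst d μ η p q w :=
  le_iSup₂_of_le c r (le_iSup_of_le hr le_rfl)

end Luxemburg

theorem statement16_general {X : Type*} [MeasurableSpace X]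
    (d : X → X → ℝ) (μ : Measure X)
    (hball : ∀ (c : X) (r : ℝ), MeasurableSet (qball d c r))
    (η : ℝ)
    (p q : X → ℝ≥0∞) (hq : MemP1 μ q)
    (ω : X → ℝ≥0∞) (hω : IsWeight d μ ω)
    (hA : ApqConst d μ η p q ω ≠ ∞) :
    ∃ C : ℝ≥0∞, C ≠ ∞ ∧ ∀ (c : X) (r : ℝ), 0 < r →
      (∫⁻ x in qball d c r,
        (luxNorm μ (conjExp p) ((qball d c r).indicator fun y => (ω y)⁻¹)) ^
            (q x).toReal *
          μ (qball d c r) ^ ((η - 1) * (q x).toReal) * ω x ^ (q x).toReal ∂μ) ≤ C := by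
  obtain ⟨-, hq1, hqfin, hqsup⟩ := hq
  refine ⟨(2 * max (ApqConst d μ η p q ω) 1) ^ (essSup q μ).toReal,
    ENNReal.rpow_ne_top_of_nonneg ENNReal.toReal_nonneg
      (ENNReal.mul_ne_top ofNat_ne_top (max_ne_top hA one_ne_top)), fun c r hr => ?_⟩
  set B := qball d c r
  set a := luxNorm μ (conjExp p) (B.indicator fun y => (ω y)⁻¹) * μ B ^ (η - 1)
  have hQ : ∀ᵐ x ∂μ, (q x).toReal ≤ (essSup q μ).toReal :=
    (ae_le_essSup q).mono fun x hx => ENNReal.toReal_mono hqsup.ne hx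
  have haA : a * luxNorm μ q (B.indicator ω) ≤ ApqConst d μ η p q ω :=
    (mul_rotate _ _ _).trans_le (mul_luxNorm_le_ApqConst d η p ω c hr)
  calc _ = ∫⁻ x in B, (a * ω x) ^ (q x).toReal ∂μ := by
        refine lintegral_congr fun x => ?_
        rw [ENNReal.rpow_mul, ← ENNReal.mul_rpow_of_nonneg _ _ ENNReal.toReal_nonneg,
          ← ENNReal.mul_rpow_of_nonneg _ _ ENNReal.toReal_nonneg]
    _ ≤ ∫⁻ x, (a * B.indicator ω x) ^ (q x).toReal ∂μ := by
        rw [← lintegral_indicator (hball c r)]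
        exact lintegral_mono fun x =>
          indicator_apply_le' (fun hx => by rw [indicator_of_mem hx]) fun _ => zero_le
    _ ≤ _ := lintegral_mul_rpow_le_of_mul_luxNorm_le hq1 hqfin (hω.1.indicator (hball c r)) hQ hA
        haA

/-- For `ω ∈ A_{p(·),q(·)}`:
`∫_B ‖ω⁻¹χ_B‖_{p′(·)}^{q(x)} μ(B)^{(η−1)q(x)} ω(x)^{q(x)} dμ ≤ C`. -/
theorem statement16 {X : Type*} [MeasurableSpace X]
    (d : X → X → ℝ) (A0 : ℝ) (μ : Measure X) (Cμ : ℝ≥0∞)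
    (hd : IsQuasiMetric d A0)
    (hball : ∀ (c : X) (r : ℝ), MeasurableSet (qball d c r))
    (hdbl : IsDoubling d μ Cμ)
    (η : ℝ) (hη0 : 0 ≤ η) (hη1 : η < 1)
    (p q : X → ℝ≥0∞) (hp : MemP1 μ p) (hq : MemP1 μ q)
    (hpq : ∀ x, (p x)⁻¹ = (q x)⁻¹ + ENNReal.ofReal η)
    (ω : X → ℝ≥0∞) (hω : IsWeight d μ ω)
    (hA : ApqConst d μ η p q ω ≠ ∞) :
    ∃ C : ℝ≥0∞, C ≠ ∞ ∧ ∀ (c : X) (r : ℝ), 0 < r →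
      (∫⁻ x in qball d c r,
        (luxNorm μ (conjExp p) ((qball d c r).indicator fun y => (ω y)⁻¹)) ^
            (q x).toReal *
          μ (qball d c r) ^ ((η - 1) * (q x).toReal) * ω x ^ (q x).toReal ∂μ) ≤ C :=
  statement16_general d μ hball η p q hq ω hω hA

end
end
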